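/- For all graphs G and H, the stroll-nonrepetitive chromatic number of the strong product satisfies ρ(G ⊠ H) ≤ ρ(G) · σ(H). -/

import Mathlib

/-- The strong product `G ⊠ H`. -/
def StrongProd {V W : Type*} (G : SimpleGraph V) (H : SimpleGraph W) :
    SimpleGraph (V × W) where
  Adj p q := p ≠ q ∧ (p.1 = q.1 ∨ G.Adj p.1 q.1) ∧ (p.2 = q.2 ∨ H.Adj p.2 q.2)
  symm := ⟨by
    rintro p q ⟨hne, h1, h2⟩
    exact ⟨hne.symm, h1.imp Eq.symm SimpleGraph.Adj.symm,
      h2.imp Eq.symm SimpleGraph.Adj.symm⟩⟩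
  loopless := ⟨by rintro p ⟨hne, -, -⟩; exact hne rfl⟩

/-- `v 0, …, v (n-1)` is a walk in `G`. -/
def IsWalkSeq {V : Type*} (G : SimpleGraph V) (n : ℕ) (v : ℕ → V) : Prop :=
  ∀ i, i + 1 < n → G.Adj (v i) (v (i + 1))

/-- A colouring is walk-nonrepetitive if every repetitively coloured walk is boring. -/
def WalkNonrepetitive {V C : Type*} (G : SimpleGraph V) (φ : V → C) : Prop :=
  ∀ t : ℕ, 0 < t → ∀ v : ℕ → V, IsWalkSeq G (2 * t) v →
    (∀ i < t, φ (v i) = φ (v (t + i))) → ∀ i < t, v i = v (t + i)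

/-- A colouring is stroll-nonrepetitive if no stroll is repetitively coloured. -/
def StrollNonrepetitive {V C : Type*} (G : SimpleGraph V) (φ : V → C) : Prop :=
  ∀ t : ℕ, 0 < t → ∀ v : ℕ → V, IsWalkSeq G (2 * t) v →
    (∀ i < t, v i ≠ v (t + i)) → ∃ i < t, φ (v i) ≠ φ (v (t + i))

/-!
A stroll-nonrepetitive colouring is proper, so along a lazy walk a step is lazy exactly when its
two ends get the same colour. Hence in a repetitively coloured lazy walk the lazy steps come in
mirrored pairs (or sit at the junction of the two halves); deleting such a pair leaves a shorter
repetitively coloured lazy walk, and induction shows that no lazy stroll is repetitively coloured.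
A walk-nonrepetitive colouring is stroll-nonrepetitive, and two equally coloured vertices with a
common lazy neighbour coincide, so a repetitively coloured lazy walk that is boring at one index
is boring everywhere. In `G ⊠ H` both projections of a walk are lazy walks; under the product
colouring the projection to `H` is therefore boring, which makes the projection to `G` a
repetitively coloured lazy stroll.
-/

def LazyWalk {V : Type*} (G : SimpleGraph V) (n : ℕ) (v : ℕ → V) : Prop :=
  ∀ i, i + 1 < n → v i = v (i + 1) ∨ G.Adj (v i) (v (i + 1))

def skip (j k : ℕ) : ℕ := if k < j then k else k + 1

section LazyWalk

variable {V : Type*} {G : SimpleGraph V}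

lemma LazyWalk.isWalkSeq {n : ℕ} {v : ℕ → V} (hv : LazyWalk G n v)
    (hne : ∀ i, i + 1 < n → v i ≠ v (i + 1)) : IsWalkSeq G n v :=
  fun i hi => (hv i hi).resolve_left (hne i hi)

lemma LazyWalk.mono {m n : ℕ} {v : ℕ → V} (hv : LazyWalk G n v) (hmn : m ≤ n) :
    LazyWalk G m v :=
  fun i hi => hv i (by omega)

lemma LazyWalk.comp_skip {n j : ℕ} {v : ℕ → V} (hv : LazyWalk G (n + 1) v)
    (hj : j < n → v j = v (j + 1)) : LazyWalk G n (v ∘ skip j) := by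
  intro k hk
  simp only [Function.comp, skip]
  split_ifs
  · exact hv k (by omega)
  · obtain rfl : j = k + 1 := by omega
    rw [← hj hk]
    exact hv k (by omega)
  · omega
  · exact hv (k + 1) (by omega)

lemma StrongProd.lazyWalk_fst {W : Type*} {H : SimpleGraph W} {n : ℕ} {v : ℕ → V × W}
    (hv : IsWalkSeq (StrongProd G H) n v) : LazyWalk G n (Prod.fst ∘ v) :=
  fun i hi => (hv i hi).2.1

lemma StrongProd.lazyWalk_snd {W : Type*} {H : SimpleGraph W} {n : ℕ} {v : ℕ → V × W}
    (hv : IsWalkSeq (StrongProd G H) n v) : LazyWalk H n (Prod.snd ∘ v) :=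
  fun i hi => (hv i hi).2.2

end LazyWalk

section MirroredDeletion

lemma skip_skip_of_lt {t m k : ℕ} (hm : m ≤ t) (hk : k < t) :
    skip (t + 1 + m) (skip m k) = skip m k ∧
      skip (t + 1 + m) (skip m (t + k)) = t + 1 + skip m k := by
  unfold skip
  constructor <;> split_ifs <;> omega

variable {V C : Type*} {G : SimpleGraph V} {φ : V → C}

lemma eq_iff_color_eq (hφ : ∀ ⦃x y⦄, G.Adj x y → φ x ≠ φ y) {x y : V}
    (hxy : x = y ∨ G.Adj x y) : x = y ↔ φ x = φ y :=
  ⟨congrArg φ, fun he => hxy.resolve_right fun ha => hφ ha he⟩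

/-- For `m = t` the deleted lazy step is the junction, and `skip (2 * t + 1)` only drops the last
entry. -/
lemma LazyWalk.comp_skip_skip {t m : ℕ} {v : ℕ → V} (hv : LazyWalk G (2 * (t + 1)) v)
    (hvm : v m = v (m + 1))
    (hvm' : m < t → v (t + 1 + m) = v (t + 1 + m + 1)) :
    LazyWalk G (2 * t) (v ∘ skip (t + 1 + m) ∘ skip m) := by
  have hfirst : LazyWalk G (2 * t + 1) (v ∘ skip (t + 1 + m)) :=
    (hv.mono (by omega : 2 * t + 2 ≤ 2 * (t + 1))).comp_skip fun h => hvm' (by omega)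
  refine hfirst.comp_skip fun hm => ?_
  simp only [Function.comp, skip]
  rw [if_pos (by omega), if_pos (by omega), hvm]

lemma exists_mirrored_lazy_step (hφ : ∀ ⦃x y⦄, G.Adj x y → φ x ≠ φ y) {t i : ℕ}
    {v : ℕ → V} (hv : LazyWalk G (2 * (t + 1)) v)
    (hc : ∀ i < t + 1, φ (v i) = φ (v (t + 1 + i)))
    (hi : i + 1 < 2 * (t + 1)) (hvi : v i = v (i + 1)) :
    ∃ m ≤ t, v m = v (m + 1) ∧ (m < t → v (t + 1 + m) = v (t + 1 + m + 1)) := by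
  have mirror : ∀ m < t, v m = v (m + 1) ↔ v (t + 1 + m) = v (t + 1 + m + 1) := fun m hm => by
    rw [eq_iff_color_eq hφ (hv m (by omega)), eq_iff_color_eq hφ (hv (t + 1 + m) (by omega)),
      hc m (by omega), hc (m + 1) (by omega)]
    rfl
  rcases lt_trichotomy i t with hit | rfl | hit
  · exact ⟨i, hit.le, hvi, fun _ => (mirror i hit).1 hvi⟩
  · exact ⟨i, le_rfl, hvi, fun h => absurd h (lt_irrefl i)⟩
  · obtain ⟨m, rfl⟩ : ∃ m, i = t + 1 + m := ⟨i - (t + 1), by omega⟩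
    exact ⟨m, by omega, (mirror m (by omega)).2 hvi, fun _ => hvi⟩

end MirroredDeletion

section Nonrepetitive

variable {V C : Type*} {G : SimpleGraph V} {φ : V → C}

lemma StrollNonrepetitive.adj_ne (h : StrollNonrepetitive G φ) ⦃x y : V⦄ (hxy : G.Adj x y) :
    φ x ≠ φ y := by
  obtain ⟨i, hi, hne⟩ := h 1 one_pos (fun i => if i = 0 then x else y)
    (fun i hi => by obtain rfl : i = 0 := (by omega); simpa using hxy)
    (fun i hi => by obtain rfl : i = 0 := (by omega); simpa using hxy.ne)
  obtain rfl : i = 0 := by omega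
  simpa using hne

theorem StrollNonrepetitive.exists_eq_of_lazyWalk (h : StrollNonrepetitive G φ) {t : ℕ}
    (ht : 0 < t) {v : ℕ → V} (hv : LazyWalk G (2 * t) v)
    (hc : ∀ i < t, φ (v i) = φ (v (t + i))) : ∃ i < t, v i = v (t + i) := by
  induction t generalizing v with
  | zero => omega
  | succ t ih =>
    by_cases hlazy : ∃ i, i + 1 < 2 * (t + 1) ∧ v i = v (i + 1)
    swap
    · push Not at hlazy
      by_contra! hne
      obtain ⟨i, hi, hci⟩ := h (t + 1) ht v (hv.isWalkSeq hlazy) hne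
      exact hci (hc i hi)
    obtain ⟨i, hi, hvi⟩ := hlazy
    rcases Nat.eq_zero_or_pos t with rfl | htpos
    · exact ⟨0, one_pos, by obtain rfl : i = 0 := (by omega); exact hvi⟩
    obtain ⟨m, hm, hvm, hvm'⟩ := exists_mirrored_lazy_step h.adj_ne hv hc hi hvi
    have hidx := fun k (hk : k < t) => skip_skip_of_lt hm hk
    obtain ⟨k, hk, hwk⟩ := ih htpos (hv.comp_skip_skip hvm hvm') fun k hk => by
      simp only [Function.comp, (hidx k hk).1, (hidx k hk).2]
      exact hc _ (by unfold skip; split_ifs <;> omega)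
    simp only [Function.comp, (hidx k hk).1, (hidx k hk).2] at hwk
    exact ⟨skip m k, by unfold skip; split_ifs <;> omega, hwk⟩

lemma WalkNonrepetitive.strollNonrepetitive (h : WalkNonrepetitive G φ) :
    StrollNonrepetitive G φ := by
  intro t ht v hv hne
  by_contra! hc
  exact hne 0 ht (h t ht v hv hc 0 ht)

lemma WalkNonrepetitive.eq_of_color_eq_of_common_neighbor (h : WalkNonrepetitive G φ)
    {x y z : V} (hxy : φ x = φ y) (hx : x = z ∨ G.Adj x z) (hy : y = z ∨ G.Adj y z) :
    x = y := by
  have hφ := h.strollNonrepetitive.adj_ne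
  rcases hx with rfl | hx
  · exact ((eq_iff_color_eq hφ hy).2 hxy.symm).symm
  rcases hy with rfl | hy
  · exact (eq_iff_color_eq hφ (Or.inr hx)).2 hxy
  -- the walk `x z y z` is repetitively coloured
  simpa using h 2 two_pos (fun i => if i = 0 then x else if i = 2 then y else z)
    (fun i hi => by
      have : i < 3 := by omega
      interval_cases i <;> simp [hx, hy, hy.symm])
    (fun i hi => by interval_cases i <;> simp [hxy]) 0 two_pos

theorem WalkNonrepetitive.eq_of_lazyWalk (h : WalkNonrepetitive G φ) {t : ℕ} (ht : 0 < t)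
    {v : ℕ → V} (hv : LazyWalk G (2 * t) v) (hc : ∀ i < t, φ (v i) = φ (v (t + i))) :
    ∀ i < t, v i = v (t + i) := by
  have step : ∀ i, i + 1 < t → (v i = v (t + i) ↔ v (i + 1) = v (t + (i + 1))) := by
    intro i hi
    have hfst := hv i (by omega)
    have hsnd : v (t + i) = v (t + (i + 1)) ∨ G.Adj (v (t + i)) (v (t + (i + 1))) :=
      hv (t + i) (by omega)
    constructor
    · intro he
      refine h.eq_of_color_eq_of_common_neighbor (hc (i + 1) hi) ?_ ?_ (z := v i)
      · exact hfst.imp Eq.symm SimpleGraph.Adj.symm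
      · exact he ▸ hsnd.imp Eq.symm SimpleGraph.Adj.symm
    · intro he
      refine h.eq_of_color_eq_of_common_neighbor (hc i (by omega)) hfst ?_
      exact he ▸ hsnd
  have all_iff : ∀ i < t, (v i = v (t + i) ↔ v 0 = v (t + 0)) := by
    intro i hi
    induction i with
    | zero => rfl
    | succ i ih => exact (step i hi).symm.trans (ih (by omega))
  obtain ⟨i₀, hi₀, he⟩ := h.strollNonrepetitive.exists_eq_of_lazyWalk ht hv hc
  exact fun i hi => (all_iff i hi).2 ((all_iff i₀ hi₀).1 he)

end Nonrepetitive

/-- `ρ(G ⊠ H) ≤ ρ(G) · σ(H)`: from a stroll-nonrepetitive colouring of `G` with `a`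
colours and a walk-nonrepetitive colouring of `H` with `b` colours one obtains a
stroll-nonrepetitive colouring of `G ⊠ H` with `a·b` colours. -/
theorem rho_strongProd_le {V W : Type*} (G : SimpleGraph V) (H : SimpleGraph W)
    (a b : ℕ)
    (hG : ∃ φ : V → Fin a, StrollNonrepetitive G φ)
    (hH : ∃ ψ : W → Fin b, WalkNonrepetitive H ψ) :
    ∃ χ : V × W → Fin (a * b), StrollNonrepetitive (StrongProd G H) χ := by
  obtain ⟨φ, hφ⟩ := hG
  obtain ⟨ψ, hψ⟩ := hH
  refine ⟨fun p => finProdFinEquiv (φ p.1, ψ p.2), fun t ht v hv hne => ?_⟩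
  by_contra! hrep
  have hcol : ∀ i < t, φ (v i).1 = φ (v (t + i)).1 ∧ ψ (v i).2 = ψ (v (t + i)).2 :=
    fun i hi => Prod.ext_iff.1 (finProdFinEquiv.injective (hrep i hi))
  have hsnd : ∀ i < t, (v i).2 = (v (t + i)).2 :=
    hψ.eq_of_lazyWalk ht (StrongProd.lazyWalk_snd hv) fun i hi => (hcol i hi).2
  obtain ⟨i, hi, hfst⟩ :=
    hφ.exists_eq_of_lazyWalk ht (StrongProd.lazyWalk_fst hv) fun i hi => (hcol i hi).1
  exact hne i hi (Prod.ext hfst (hsnd i hi))
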